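/- Let p > 1 and X = ℓ_p. The set of all T ∈ 𝒫₁(X) having no non-trivial closed invariant ideal (i.e. no closed ideal V of ℓ_p with {0} ≠ V ≠ ℓ_p and T(V) ⊆ V) is comeager in (𝒫₁(X), WOT) and comeager in (𝒫₁(X), SOT_*). -/

import Mathlib

open scoped ENNReal

noncomputable section

/-- The sequence space `ℓ_p` over `ℂ`. -/
abbrev LpSeq (p : ℝ≥0∞) := lp (fun _ : ℕ => ℂ) p

/-- A vector of `ℓ_p` is positive if all its coordinates are nonnegative reals. -/
def PosVec {p : ℝ≥0∞} (x : lp (fun _ : ℕ => ℂ) p) : Prop :=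
  ∀ n : ℕ, 0 ≤ (x n).re ∧ (x n).im = 0

/-- The set `𝒫₁(ℓ_p)` of positive contractions on `ℓ_p`. -/
def P1 (p : ℝ≥0∞) [Fact (1 ≤ p)] : Set (LpSeq p →L[ℂ] LpSeq p) :=
  {T | (∀ x : LpSeq p, PosVec x → PosVec (T x)) ∧ ‖T‖ ≤ 1}

/-- The strong operator topology (pointwise norm-convergence) on operators of `ℓ_p`. -/
def sotOp (p : ℝ≥0∞) [Fact (1 ≤ p)] : TopologicalSpace (LpSeq p →L[ℂ] LpSeq p) :=
  TopologicalSpace.induced (fun T => (fun x : LpSeq p => T x)) Pi.topologicalSpace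

/-- The weak operator topology on operators of `ℓ_p`. -/
def wotOp (p : ℝ≥0∞) [Fact (1 ≤ p)] : TopologicalSpace (LpSeq p →L[ℂ] LpSeq p) :=
  TopologicalSpace.induced
    (fun T => (fun q : LpSeq p × StrongDual ℂ (LpSeq p) => q.2 (T q.1)))
    Pi.topologicalSpace

/-- The dual strong operator topology `SOT_*` (pointwise norm-convergence of the adjoints,
acting on the dual space). -/
def sotStarDualOp (p : ℝ≥0∞) [Fact (1 ≤ p)] : TopologicalSpace (LpSeq p →L[ℂ] LpSeq p) :=
  TopologicalSpace.induced
    (fun T => (fun y : StrongDual ℂ (LpSeq p) => y.comp T))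
    Pi.topologicalSpace

/-- The `SOT*` topology, the join of `SOT` and `SOT_*` (pointwise norm-convergence of the
operators and of their adjoints).  Recall that in the order on `TopologicalSpace`,
`⊓` is the join (the coarsest topology refining both). -/
def sotSStarDualOp (p : ℝ≥0∞) [Fact (1 ≤ p)] : TopologicalSpace (LpSeq p →L[ℂ] LpSeq p) :=
  sotOp p ⊓ sotStarDualOp p

/-- Restriction of a topology to a subset. -/
def rtop {α : Type*} (s : Set α) (t : TopologicalSpace α) : TopologicalSpace ↥s :=
  t.induced Subtype.val

/-- A submodule `V` of `ℓ_p` is an ideal if whenever `|x| ≤ |y|` coordinatewise and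
`y ∈ V`, one has `x ∈ V`. -/
def IsIdealLp {p : ℝ≥0∞} [Fact (1 ≤ p)] (V : Submodule ℂ (LpSeq p)) : Prop :=
  ∀ x y : LpSeq p, (∀ n : ℕ, ‖x n‖ ≤ ‖y n‖) → y ∈ V → x ∈ V

/-!
If all matrix entries `⟨T e_i, e_j⟩` of `T` are nonzero, `T` has no nontrivial closed invariant
ideal: an ideal containing a vector with `y_i ≠ 0` contains `e_i`, so an invariant one also
contains every `e_j` (as `(T e_i)_j ≠ 0`), and being closed it is all of `ℓ_p`.
Each condition `⟨T e_i, e_j⟩ ≠ 0` is WOT-open, and it is norm-dense in `𝒫₁(ℓ_p)`: for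
`0 < ε < 1` the positive contraction `(1 - ε) T + ε (x ↦ x_i e_j)` has `(i, j)` entry of real
part at least `ε`. Hence it is dense open for every topology between the norm topology and WOT,
such as SOT_*, and the countable intersection of these conditions is comeager.
-/

open Filter Topology

namespace LpSeq

variable {p : ℝ≥0∞}

lemma single_eq_smul_single_one (i : ℕ) (c : ℂ) :
    (lp.single p i c : LpSeq p) = c • (lp.single p i 1 : LpSeq p) := by
  rw [← lp.single_smul, smul_eq_mul, mul_one]

lemma _root_.PosVec.add {x y : LpSeq p} (hx : PosVec x) (hy : PosVec y) : PosVec (x + y) :=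
  fun n =>
  ⟨by simpa using add_nonneg (hx n).1 (hy n).1, by simp [(hx n).2, (hy n).2]⟩

lemma _root_.PosVec.smul {x : LpSeq p} (hx : PosVec x) {a : ℝ} (ha : 0 ≤ a) :
    PosVec (a • x) := fun n =>
  ⟨by simpa using mul_nonneg ha (hx n).1, by simp [(hx n).2]⟩

lemma posVec_single_one (i : ℕ) : PosVec (lp.single p i 1 : LpSeq p) := fun n => by
  rcases eq_or_ne n i with rfl | hni
  · simp
  · simp [hni]

variable [Fact (1 ≤ p)]

def entry (T : LpSeq p →L[ℂ] LpSeq p) (i j : ℕ) : ℂ := T (lp.single p i 1) j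

def HasNontrivialInvariantIdeal (T : LpSeq p →L[ℂ] LpSeq p) : Prop :=
  ∃ V : Submodule ℂ (LpSeq p), IsIdealLp V ∧ IsClosed (V : Set (LpSeq p)) ∧
    V ≠ ⊥ ∧ V ≠ ⊤ ∧ ∀ x ∈ V, T x ∈ V

lemma _root_.IsIdealLp.single_one_mem {V : Submodule ℂ (LpSeq p)} (hV : IsIdealLp V)
    {y : LpSeq p} (hy : y ∈ V) {i : ℕ} (hyi : y i ≠ 0) : lp.single p i 1 ∈ V := by
  have hyi_mem : lp.single p i (y i) ∈ V := by
    refine hV _ y (fun n => ?_) hy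
    rcases eq_or_ne n i with rfl | hni
    · rw [lp.single_apply_self]
    · rw [lp.single_apply_ne p i _ hni, norm_zero]
      exact norm_nonneg _
  simpa [single_eq_smul_single_one i (y i), smul_smul, inv_mul_cancel₀ hyi] using
    V.smul_mem (y i)⁻¹ hyi_mem

lemma submodule_eq_top_of_single_one_mem (hp : p ≠ ⊤) {V : Submodule ℂ (LpSeq p)}
    (hV : IsClosed (V : Set (LpSeq p))) (h : ∀ i, lp.single p i 1 ∈ V) : V = ⊤ := by
  refine Submodule.eq_top_iff'.mpr fun f => ?_
  refine hV.mem_of_tendsto (lp.hasSum_single hp f) (Eventually.of_forall fun s => ?_)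
  refine V.sum_mem fun i _ => ?_
  rw [single_eq_smul_single_one]
  exact V.smul_mem _ (h i)

lemma not_hasNontrivialInvariantIdeal_of_entry_ne_zero (hp : p ≠ ⊤)
    {T : LpSeq p →L[ℂ] LpSeq p} (hT : ∀ i j, entry T i j ≠ 0) :
    ¬ HasNontrivialInvariantIdeal T := by
  rintro ⟨V, hIdeal, hClosed, hBot, hTop, hInv⟩
  obtain ⟨y, hyV, hy⟩ := Submodule.exists_mem_ne_zero_of_ne_bot hBot
  obtain ⟨i, hi⟩ : ∃ i, y i ≠ 0 := by
    by_contra! h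
    exact hy (lp.ext (funext h))
  have hei : lp.single p i 1 ∈ V := hIdeal.single_one_mem hyV hi
  exact hTop <| submodule_eq_top_of_single_one_mem hp hClosed fun j =>
    hIdeal.single_one_mem (hInv _ hei) (hT i j)

lemma convex_P1 : Convex ℝ (P1 p) := by
  intro S hS T hT a b ha hb hab
  refine ⟨fun x hx => ((hS.1 x hx).smul ha).add ((hT.1 x hx).smul hb), ?_⟩
  calc ‖a • S + b • T‖ ≤ a * ‖S‖ + b * ‖T‖ := by
        refine (norm_add_le _ _).trans_eq ?_
        rw [norm_smul, norm_smul, Real.norm_of_nonneg ha, Real.norm_of_nonneg hb]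
    _ ≤ a * 1 + b * 1 := by gcongr; exacts [hS.2, hT.2]
    _ = 1 := by rw [mul_one, mul_one, hab]

lemma re_entry_nonneg {T : LpSeq p →L[ℂ] LpSeq p} (hT : T ∈ P1 p) (i j : ℕ) :
    0 ≤ (entry T i j).re :=
  (hT.1 _ (posVec_single_one i) j).1

def matrixUnit (i j : ℕ) : LpSeq p →L[ℂ] LpSeq p :=
  (lp.evalCLM ℂ (fun _ : ℕ => ℂ) p i).smulRight (lp.single p j 1)

lemma matrixUnit_apply (i j : ℕ) (x : LpSeq p) :
    matrixUnit i j x = x i • (lp.single p j 1 : LpSeq p) := rfl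

lemma matrixUnit_mem_P1 (i j : ℕ) : matrixUnit (p := p) i j ∈ P1 p := by
  refine ⟨fun x hx => ?_, ?_⟩
  · rw [matrixUnit_apply, ← Complex.re_add_im (x i), (hx i).2, Complex.ofReal_zero, zero_mul,
      add_zero, Complex.coe_smul]
    exact (posVec_single_one j).smul (hx i).1
  · rw [matrixUnit, ContinuousLinearMap.norm_smulRight_apply,
      lp.norm_single (zero_lt_one.trans_le Fact.out), norm_one, mul_one]
    exact LinearMap.mkContinuous_norm_le _ zero_le_one _

lemma entry_matrixUnit_self (i j : ℕ) : entry (matrixUnit (p := p) i j) i j = 1 := by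
  simp [entry, matrixUnit_apply]

lemma entry_smul_add_smul (a b : ℝ) (S T : LpSeq p →L[ℂ] LpSeq p) (i j : ℕ) :
    entry (a • S + b • T) i j = a • entry S i j + b • entry T i j := rfl

lemma entry_ne_zero_of_mem_openSegment {T S : LpSeq p →L[ℂ] LpSeq p} (hT : T ∈ P1 p)
    {i j : ℕ} (hS : S ∈ openSegment ℝ T (matrixUnit i j)) : entry S i j ≠ 0 := by
  obtain ⟨a, b, ha, hb, -, rfl⟩ := hS
  have hre : (entry (a • T + b • matrixUnit i j) i j).re = a * (entry T i j).re + b := by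
    rw [entry_smul_add_smul, entry_matrixUnit_self]
    simp
  intro h
  rw [h, Complex.zero_re] at hre
  nlinarith [re_entry_nonneg hT i j]

lemma mem_closure_val_image_setOf_entry_ne_zero {T : LpSeq p →L[ℂ] LpSeq p} (hT : T ∈ P1 p)
    (i j : ℕ) : T ∈ closure (Subtype.val '' {S : P1 p | entry S.1 i j ≠ 0}) := by
  refine closure_mono ?_ <|
    segment_subset_closure_openSegment (left_mem_segment ℝ T (matrixUnit i j))
  intro S hS
  exact ⟨⟨S, convex_P1.openSegment_subset hT (matrixUnit_mem_P1 i j) hS⟩,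
    entry_ne_zero_of_mem_openSegment hT hS, rfl⟩

lemma continuous_entry_wotOp (i j : ℕ) :
    Continuous[wotOp p, _] fun T : LpSeq p →L[ℂ] LpSeq p => entry T i j := by
  let := wotOp p
  have h : Continuous fun (T : LpSeq p →L[ℂ] LpSeq p)
      (q : LpSeq p × StrongDual ℂ (LpSeq p)) => q.2 (T q.1) := continuous_induced_dom
  exact (continuous_apply (lp.single p i 1, lp.evalCLM ℂ (fun _ : ℕ => ℂ) p j)).comp h

lemma sotStarDualOp_le_wotOp : sotStarDualOp p ≤ wotOp p := by
  let := sotStarDualOp p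
  have h : Continuous fun (T : LpSeq p →L[ℂ] LpSeq p) (y : StrongDual ℂ (LpSeq p)) =>
      y.comp T := continuous_induced_dom
  refine continuous_iff_le_induced.mp (continuous_pi fun q => ?_)
  exact (ContinuousLinearMap.apply ℂ ℂ q.1).continuous.comp ((continuous_apply q.2).comp h)

lemma norm_le_sotStarDualOp : ContinuousLinearMap.topologicalSpace ≤ sotStarDualOp p :=
  continuous_iff_le_induced.mp (continuous_pi fun _ => continuous_const.clm_comp continuous_id)

variable {t : TopologicalSpace (LpSeq p →L[ℂ] LpSeq p)}

lemma isOpen_setOf_entry_ne_zero (ht : t ≤ wotOp p) (i j : ℕ) :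
    IsOpen[rtop (P1 p) t] {T : P1 p | entry T.1 i j ≠ 0} :=
  isOpen_compl_singleton.preimage <|
    (continuous_le_dom ht (continuous_entry_wotOp i j)).comp continuous_induced_dom

lemma dense_setOf_entry_ne_zero (ht : ContinuousLinearMap.topologicalSpace ≤ t) (i j : ℕ) :
    @Dense _ (rtop (P1 p) t) {T : P1 p | entry T.1 i j ≠ 0} := by
  intro T
  rw [rtop, closure_induced]
  exact closure.mono ht (mem_closure_val_image_setOf_entry_ne_zero T.2 i j)

lemma setOf_forall_entry_ne_zero_mem_residual
    (hnorm : ContinuousLinearMap.topologicalSpace ≤ t) (hwot : t ≤ wotOp p) :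
    {T : P1 p | ∀ i j, entry T.1 i j ≠ 0} ∈
      @residual _ (rtop (P1 p) t) := by
  let := rtop (P1 p) t
  simp only [Set.ofPred_forall]
  exact countable_iInter_mem.mpr fun i => countable_iInter_mem.mpr fun j =>
    residual_of_dense_open (isOpen_setOf_entry_ne_zero hwot i j)
      (dense_setOf_entry_ne_zero hnorm i j)

lemma setOf_not_hasNontrivialInvariantIdeal_mem_residual (hp : p ≠ ⊤)
    (hnorm : ContinuousLinearMap.topologicalSpace ≤ t) (hwot : t ≤ wotOp p) :
    {T : P1 p | ¬ HasNontrivialInvariantIdeal T.1} ∈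
      @residual _ (rtop (P1 p) t) :=
  mem_of_superset (setOf_forall_entry_ne_zero_mem_residual hnorm hwot) fun _ hT =>
    not_hasNontrivialInvariantIdeal_of_entry_ne_zero hp hT

end LpSeq

theorem typical_positive_contraction_no_invariant_ideal_general
    (p : ℝ≥0∞) [Fact (1 ≤ p)] (hp' : p ≠ ⊤) :
    {T : ↥(P1 p) | ¬ ∃ V : Submodule ℂ (LpSeq p), IsIdealLp V ∧
        IsClosed (V : Set (LpSeq p)) ∧ V ≠ ⊥ ∧ V ≠ ⊤ ∧
        ∀ x ∈ V, (T : LpSeq p →L[ℂ] LpSeq p) x ∈ V}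
        ∈ @residual ↥(P1 p) (rtop (P1 p) (wotOp p)) ∧
    {T : ↥(P1 p) | ¬ ∃ V : Submodule ℂ (LpSeq p), IsIdealLp V ∧
        IsClosed (V : Set (LpSeq p)) ∧ V ≠ ⊥ ∧ V ≠ ⊤ ∧
        ∀ x ∈ V, (T : LpSeq p →L[ℂ] LpSeq p) x ∈ V}
        ∈ @residual ↥(P1 p) (rtop (P1 p) (sotStarDualOp p)) :=
  ⟨LpSeq.setOf_not_hasNontrivialInvariantIdeal_mem_residual hp'
      (LpSeq.norm_le_sotStarDualOp.trans LpSeq.sotStarDualOp_le_wotOp) le_rfl,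
    LpSeq.setOf_not_hasNontrivialInvariantIdeal_mem_residual hp'
      LpSeq.norm_le_sotStarDualOp LpSeq.sotStarDualOp_le_wotOp⟩

/-- Let `p > 1` and `X = ℓ_p`.  The set of all `T ∈ 𝒫₁(X)` having no
non-trivial closed invariant ideal is comeager in `(𝒫₁(X), WOT)` and comeager in
`(𝒫₁(X), SOT_*)`. -/
theorem typical_positive_contraction_no_invariant_ideal
    (p : ℝ≥0∞) [Fact (1 ≤ p)] (hp : 1 < p) (hp' : p ≠ ⊤) :
    {T : ↥(P1 p) | ¬ ∃ V : Submodule ℂ (LpSeq p), IsIdealLp V ∧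
        IsClosed (V : Set (LpSeq p)) ∧ V ≠ ⊥ ∧ V ≠ ⊤ ∧
        ∀ x ∈ V, (T : LpSeq p →L[ℂ] LpSeq p) x ∈ V}
        ∈ @residual ↥(P1 p) (rtop (P1 p) (wotOp p)) ∧
    {T : ↥(P1 p) | ¬ ∃ V : Submodule ℂ (LpSeq p), IsIdealLp V ∧
        IsClosed (V : Set (LpSeq p)) ∧ V ≠ ⊥ ∧ V ≠ ⊤ ∧
        ∀ x ∈ V, (T : LpSeq p →L[ℂ] LpSeq p) x ∈ V}
        ∈ @residual ↥(P1 p) (rtop (P1 p) (sotStarDualOp p)) :=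
  typical_positive_contraction_no_invariant_ideal_general p hp'
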